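/- Let N ≥ 2, and let f : [0,∞) → ℝ be continuous with lim_{t→∞} f(t)/t = +∞. Let u ∈ C²(ℝ^N_+) satisfy -Δu ≥ f(u) and u ≥ 0 in ℝ^N_+. Then for every R > 0 there exists a constant C₁ = C₁(N, f, R) > 0 such that for every open ball B(z,2R) compactly contained in ℝ^N_+, ∫_{B(z,R)} u ≤ C₁. (Note: the bound is independent of the center z.) -/

import Mathlib

/-!
Test the inequality against the first Dirichlet eigenfunction
`φ x = ∏ₖ cos (π (xₖ - yₖ) / (2L))` of a cube `Q` of half-side `L`, whose eigenvalue is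
`λ = N (π / (2L))²`. Superlinearity gives `f t ≥ (λ + 1) t - B` for `t ≥ 0`. Green's identity on `Q`
(where `φ` vanishes on `∂Q` and `u ≥ 0`, `∂φ/∂ν ≤ 0` there) gives `∫_Q (-Δu) φ ≤ λ ∫_Q u φ`, hence
`∫_Q u φ ≤ B ∫_Q φ ≤ B |Q|`. As `φ ≥ cos (π/4) ^ N` on the ball of radius `L / 2` about the centre
of `Q`, the integral of `u` over that ball is bounded independently of the cube. Translating one
finite cover of `closedBall 0 R` by such balls covers every `B(z, R)` by the same number of them.
-/

open Set Filter MeasureTheory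

/-- The Laplacian of `u : ℝ^N → ℝ`, as the sum of the second partial derivatives. -/
noncomputable def lap {N : ℕ} (u : EuclideanSpace ℝ (Fin N) → ℝ)
    (x : EuclideanSpace ℝ (Fin N)) : ℝ :=
  ∑ i, fderiv ℝ (fun y => fderiv ℝ u y (EuclideanSpace.single i 1)) x
    (EuclideanSpace.single i 1)

open Real

theorem exists_mul_sub_le_of_tendsto_div_atTop {f : ℝ → ℝ} (hf : ContinuousOn f (Ici 0))
    (hsup : Tendsto (fun t => f t / t) atTop atTop) (A : ℝ) :
    ∃ B, 0 ≤ B ∧ ∀ t, 0 ≤ t → A * t - B ≤ f t := by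
  obtain ⟨T, hT⟩ := (hsup.eventually_ge_atTop A).exists_forall_of_atTop
  obtain ⟨M, hM⟩ := isCompact_Icc.bddBelow_image
    (hf.mono (Icc_subset_Ici_self : Icc 0 (max T 1) ⊆ Ici 0))
  refine ⟨max 0 (|A| * max T 1 - M), le_max_left _ _, fun t ht => ?_⟩
  rcases le_or_gt t (max T 1) with htT | htT
  · have hAt : A * t ≤ |A| * max T 1 :=
      (le_abs_self _).trans (by rw [abs_mul, abs_of_nonneg ht]; gcongr)
    linarith [le_max_right 0 (|A| * max T 1 - M), hM (mem_image_of_mem f ⟨ht, htT⟩)]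
  · have ht0 : 0 < t := lt_of_lt_of_le one_pos ((le_max_right T 1).trans htT.le)
    have hAt : A * t ≤ f t := (le_div_iff₀ ht0).mp (hT t ((le_max_left T 1).trans htT.le))
    linarith [le_max_left 0 (|A| * max T 1 - M)]

theorem setIntegral_le_sum_of_subset_biUnion {X ι : Type*} [MeasurableSpace X] {μ : Measure X}
    {f : X → ℝ} {S : Set X} {t : Finset ι} {A : ι → Set X} (hS : MeasurableSet S)
    (hA : ∀ k ∈ t, MeasurableSet (A k)) (hSA : S ⊆ ⋃ k ∈ t, A k)
    (hf : ∀ k ∈ t, IntegrableOn f (A k) μ) (hnn : ∀ k ∈ t, ∀ x ∈ A k, 0 ≤ f x) :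
    ∫ x in S, f x ∂μ ≤ ∑ k ∈ t, ∫ x in A k, f x ∂μ := by
  have hind : ∀ x, ∀ k ∈ t, 0 ≤ (A k).indicator f x := fun x k hk =>
    Set.indicator_nonneg (hnn k hk) x
  rw [← integral_indicator hS, Finset.sum_congr rfl fun k hk => (integral_indicator (hA k hk)).symm,
    ← integral_finsetSum _ fun k hk => (hf k hk).integrable_indicator (hA k hk)]
  refine integral_mono_of_nonneg (ae_of_all _ fun x => ?_)
    (integrable_finsetSum _ fun k hk => (hf k hk).integrable_indicator (hA k hk))
    (ae_of_all _ fun x => ?_)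
  · by_cases hx : x ∈ S
    · obtain ⟨k, hk, hxk⟩ := mem_iUnion₂.mp (hSA hx)
      simpa [Set.indicator_of_mem hx] using hnn k hk x hxk
    · simp [Set.indicator_of_notMem hx]
  · by_cases hx : x ∈ S
    · obtain ⟨k, hk, hxk⟩ := mem_iUnion₂.mp (hSA hx)
      rw [Set.indicator_of_mem hx, ← Set.indicator_of_mem hxk f]
      exact Finset.single_le_sum (hind x) hk
    · rw [Set.indicator_of_notMem hx]
      exact Finset.sum_nonneg (hind x)

theorem EuclideanSpace.dist_le_sqrt_card_mul {ι : Type*} [Fintype ι] {x y : EuclideanSpace ℝ ι}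
    {M : ℝ} (hM : 0 ≤ M) (h : ∀ k, |x k - y k| ≤ M) : dist x y ≤ √(Fintype.card ι) * M := by
  rw [EuclideanSpace.dist_eq, ← Real.sqrt_sq hM, ← Real.sqrt_mul (Nat.cast_nonneg _)]
  refine Real.sqrt_le_sqrt ?_
  calc ∑ k, dist (x k) (y k) ^ 2 ≤ ∑ _k : ι, M ^ 2 := Finset.sum_le_sum fun k _ => by
        rw [Real.dist_eq]
        exact pow_le_pow_left₀ (abs_nonneg _) (h k) 2
    _ = Fintype.card ι * M ^ 2 := by simp

theorem mem_closedBall_pi_iff {ι : Type*} [Fintype ι] {x y : ι → ℝ} {r : ℝ} (hr : 0 ≤ r) :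
    x ∈ Metric.closedBall y r ↔ ∀ k, |x k - y k| ≤ r := by
  simp only [Metric.mem_closedBall, dist_pi_le_iff hr, Real.dist_eq]

theorem closedBall_pi_eq_Icc {ι : Type*} [Fintype ι] (y : ι → ℝ) {r : ℝ} (hr : 0 ≤ r) :
    Metric.closedBall y r = Icc (fun k => y k - r) (fun k => y k + r) := by
  ext x
  simp only [mem_closedBall_pi_iff hr, abs_le, mem_Icc, Pi.le_def, ← forall_and]
  exact forall_congr' fun k => by constructor <;> intro h <;> constructor <;> linarith [h.1, h.2]

section PartialDeriv

variable {ι : Type*} [Fintype ι] [DecidableEq ι]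

noncomputable def partialDeriv (i : ι) (U : (ι → ℝ) → ℝ) (x : ι → ℝ) : ℝ :=
  fderiv ℝ U x (Pi.single i 1)

/-- The Laplacian on `ι → ℝ`, where Mathlib's divergence theorem for boxes lives; it agrees with
`lap` through `WithLp.toLp` (`piLaplacian_comp_toLp`). -/
noncomputable def piLaplacian (U : (ι → ℝ) → ℝ) (x : ι → ℝ) : ℝ :=
  ∑ i, partialDeriv i (partialDeriv i U) x

theorem ContDiffOn.partialDeriv {n : WithTop ℕ∞} {U : (ι → ℝ) → ℝ} {s : Set (ι → ℝ)}
    (hU : ContDiffOn ℝ (n + 1) U s) (hs : IsOpen s) (i : ι) :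
    ContDiffOn ℝ n (partialDeriv i U) s :=
  (hU.fderiv_of_isOpen hs le_rfl).clm_apply contDiffOn_const

theorem ContDiffOn.continuousOn_piLaplacian {U : (ι → ℝ) → ℝ} {s : Set (ι → ℝ)}
    (hU : ContDiffOn ℝ 2 U s) (hs : IsOpen s) : ContinuousOn (piLaplacian U) s :=
  continuousOn_finsetSum _ fun i _ =>
    (((hU.partialDeriv hs i).partialDeriv hs i) : ContDiffOn ℝ 0 _ s).continuousOn

theorem partialDeriv_mul_sub_mul_partialDeriv {U φ : (ι → ℝ) → ℝ} {x : ι → ℝ} {i : ι}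
    (hU : DifferentiableAt ℝ U x) (hφ : DifferentiableAt ℝ φ x)
    (hUi : DifferentiableAt ℝ (partialDeriv i U) x)
    (hφi : DifferentiableAt ℝ (partialDeriv i φ) x) :
    partialDeriv i (fun z => partialDeriv i U z * φ z - U z * partialDeriv i φ z) x
      = partialDeriv i (partialDeriv i U) x * φ x - U x * partialDeriv i (partialDeriv i φ) x := by
  have hF : HasFDerivAt (fun z => partialDeriv i U z * φ z - U z * partialDeriv i φ z) _ x :=
    (hUi.hasFDerivAt.mul hφ.hasFDerivAt).sub (hU.hasFDerivAt.mul hφi.hasFDerivAt)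
  rw [partialDeriv, hF.fderiv]
  simp only [partialDeriv, sub_apply, add_apply, smul_apply, smul_eq_mul]
  ring

theorem partialDeriv_prod_apply {g g' : ι → ℝ → ℝ} (hg : ∀ k t, HasDerivAt (g k) (g' k t) t)
    (i : ι) (x : ι → ℝ) :
    partialDeriv i (fun x => ∏ k, g k (x k)) x
      = g' i (x i) * ∏ k ∈ Finset.univ.erase i, g k (x k) := by
  have hprod := HasFDerivAt.finsetProd (u := Finset.univ) (x := x)
    (g := fun k (x : ι → ℝ) => g k (x k))
    fun k _ => (hg k (x k)).hasFDerivAt.comp x (hasFDerivAt_apply k x)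
  rw [partialDeriv, hprod.fderiv, sum_apply,
    Finset.sum_eq_single i (fun k _ hki => by simp [hki.symm]) (by simp)]
  simp [mul_comm]

theorem partialDeriv_partialDeriv_prod_apply {g g' : ι → ℝ → ℝ}
    (hg : ∀ k t, HasDerivAt (g k) (g' k t) t) {i : ι} {g'' : ℝ → ℝ}
    (hg' : ∀ t, HasDerivAt (g' i) (g'' t) t) (x : ι → ℝ) :
    partialDeriv i (partialDeriv i fun x => ∏ k, g k (x k)) x
      = g'' (x i) * ∏ k ∈ Finset.univ.erase i, g k (x k) := by
  have hupdate : ∀ k t, HasDerivAt (Function.update g i (g' i) k)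
      (Function.update g' i g'' k t) t := by
    intro k t
    rcases eq_or_ne k i with rfl | hki
    · simpa using hg' t
    · simpa [hki] using hg k t
  have hrest : ∀ (h : ℝ → ℝ) (x : ι → ℝ), ∏ k ∈ Finset.univ.erase i, Function.update g i h k (x k)
      = ∏ k ∈ Finset.univ.erase i, g k (x k) := fun h x =>
    Finset.prod_congr rfl fun k hk => by rw [Function.update_of_ne (Finset.ne_of_mem_erase hk)]
  have hfirst : partialDeriv i (fun x => ∏ k, g k (x k))
      = fun x => ∏ k, Function.update g i (g' i) k (x k) := by
    funext x
    rw [partialDeriv_prod_apply hg, ← Finset.mul_prod_erase _ _ (Finset.mem_univ i),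
      Function.update_self, hrest]
  rw [hfirst, partialDeriv_prod_apply hupdate, Function.update_self, hrest]

end PartialDeriv

section Green

variable {n : ℕ} {a b : Fin (n + 1) → ℝ} {s : Set (Fin (n + 1) → ℝ)}
  {U φ : (Fin (n + 1) → ℝ) → ℝ}

/-- Green's second identity on a box, as an inequality: the flux of `∂ᵢU · φ - U · ∂ᵢφ` through
the faces reduces to `-U · ∂ᵢφ`, whose sign is prescribed. -/
theorem integral_mul_piLaplacian_le (hab : a ≤ b) (hs : IsOpen s) (hQ : Icc a b ⊆ s)
    (hU : ContDiffOn ℝ 2 U s) (hφ : ContDiff ℝ 2 φ)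
    (hφa : ∀ x ∈ Icc a b, ∀ i, x i = a i → φ x = 0 ∧ 0 ≤ U x * partialDeriv i φ x)
    (hφb : ∀ x ∈ Icc a b, ∀ i, x i = b i → φ x = 0 ∧ U x * partialDeriv i φ x ≤ 0) :
    ∫ x in Icc a b, U x * piLaplacian φ x ≤ ∫ x in Icc a b, piLaplacian U x * φ x := by
  set F : Fin (n + 1) → (Fin (n + 1) → ℝ) → ℝ :=
    fun i z => partialDeriv i U z * φ z - U z * partialDeriv i φ z
  have hφs : ContDiffOn ℝ 2 φ s := hφ.contDiffOn
  have hUi : ∀ i, ContDiffOn ℝ 1 (partialDeriv i U) s := fun i => hU.partialDeriv hs i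
  have hφi : ∀ i, ContDiffOn ℝ 1 (partialDeriv i φ) s := fun i => hφs.partialDeriv hs i
  have hdiff : ∀ x ∈ s, ∀ i, DifferentiableAt ℝ (F i) x := by
    intro x hx i
    have hxs := hs.mem_nhds hx
    exact ((((hUi i).differentiableOn one_ne_zero).differentiableAt hxs).mul
      ((hφ.differentiable two_ne_zero) x)).sub
      (((hU.differentiableOn two_ne_zero).differentiableAt hxs).mul
        (((hφi i).differentiableOn one_ne_zero).differentiableAt hxs))
  have hdiv : ∀ x ∈ s, ∑ i, partialDeriv i (F i) x
      = piLaplacian U x * φ x - U x * piLaplacian φ x := by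
    intro x hx
    have hxs := hs.mem_nhds hx
    rw [piLaplacian, piLaplacian, Finset.sum_mul, Finset.mul_sum, ← Finset.sum_sub_distrib]
    exact Finset.sum_congr rfl fun i _ => partialDeriv_mul_sub_mul_partialDeriv
      ((hU.differentiableOn two_ne_zero).differentiableAt hxs) ((hφ.differentiable two_ne_zero) x)
      (((hUi i).differentiableOn one_ne_zero).differentiableAt hxs)
      (((hφi i).differentiableOn one_ne_zero).differentiableAt hxs)
  have hcont : ContinuousOn (fun x => piLaplacian U x * φ x - U x * piLaplacian φ x) (Icc a b) :=
    (((hU.continuousOn_piLaplacian hs).mul hφs.continuousOn).sub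
      (hU.continuousOn.mul (hφs.continuousOn_piLaplacian hs))).mono hQ
  have hgauss := integral_divergence_of_hasFDerivAt_off_countable' a b hab F
    (fun i x => fderiv ℝ (F i) x) ∅ countable_empty
    (fun i => (((hUi i).continuousOn.mul hφs.continuousOn).sub
      (hU.continuousOn.mul (hφi i).continuousOn)).mono hQ)
    (fun x hx i => (hdiff x (hQ ⟨fun j => (hx.1 j (mem_univ j)).1.le,
      fun j => (hx.1 j (mem_univ j)).2.le⟩) i).hasFDerivAt)
    ((hcont.integrableOn_compact isCompact_Icc).congr_fun
      (fun x hx => (hdiv x (hQ hx)).symm) measurableSet_Icc)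
  have hflux : 0 ≤ ∫ x in Icc a b, ∑ i, partialDeriv i (F i) x := by
    rw [show (fun x => ∑ i, partialDeriv i (F i) x) = fun x => ∑ i, fderiv ℝ (F i) x (Pi.single i 1)
      from rfl, hgauss]
    refine Finset.sum_nonneg fun i _ => sub_nonneg.mpr ?_
    refine (setIntegral_nonpos measurableSet_Icc fun x hx => ?_).trans
      (setIntegral_nonneg measurableSet_Icc fun x hx => ?_)
    · have hp := Fin.insertNth_mem_Icc.mpr ⟨left_mem_Icc.mpr (hab i), hx⟩
      obtain ⟨hφ0, hsign⟩ := hφa _ hp i (by simp)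
      simp only [F, hφ0, mul_zero, zero_sub, neg_nonpos, hsign]
    · have hp := Fin.insertNth_mem_Icc.mpr ⟨right_mem_Icc.mpr (hab i), hx⟩
      obtain ⟨hφ0, hsign⟩ := hφb _ hp i (by simp)
      simp only [F, hφ0, mul_zero, zero_sub, neg_nonneg, hsign]
  rw [setIntegral_congr_fun measurableSet_Icc fun x hx => hdiv x (hQ hx),
    integral_sub] at hflux
  · linarith
  · exact (((hU.continuousOn_piLaplacian hs).mul hφs.continuousOn).mono hQ).integrableOn_compact
      isCompact_Icc
  · exact ((hU.continuousOn.mul (hφs.continuousOn_piLaplacian hs)).mono hQ).integrableOn_compact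
      isCompact_Icc

end Green

section CosBump

variable {ι : Type*} [Fintype ι]

/-- The first Dirichlet eigenfunction of the cube `Metric.closedBall y L` (for the sup distance),
with eigenvalue `card ι * (π / (2 * L)) ^ 2`. -/
noncomputable def cosBump (y : ι → ℝ) (L : ℝ) (x : ι → ℝ) : ℝ :=
  ∏ k, cos (π / (2 * L) * (x k - y k))

theorem hasDerivAt_cos_mul_sub (κ c t : ℝ) :
    HasDerivAt (fun t => cos (κ * (t - c))) (-(κ * sin (κ * (t - c)))) t :=
  (((hasDerivAt_id' t).sub_const c).const_mul κ).cos.congr_deriv (by ring)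

theorem hasDerivAt_neg_mul_sin_mul_sub (κ c t : ℝ) :
    HasDerivAt (fun t => -(κ * sin (κ * (t - c)))) (-(κ ^ 2 * cos (κ * (t - c)))) t :=
  ((((hasDerivAt_id' t).sub_const c).const_mul κ).sin.const_mul κ).neg.congr_deriv (by ring)

theorem cos_le_cos_mul_of_abs_le {L M t : ℝ} (hL : 0 < L) (hM : M ≤ L) (ht : |t| ≤ M) :
    cos (π / (2 * L) * M) ≤ cos (π / (2 * L) * t) := by
  have hκ : 0 < π / (2 * L) := by positivity
  rw [← cos_abs (π / (2 * L) * t), abs_mul, abs_of_pos hκ]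
  refine cos_le_cos_of_nonneg_of_le_pi (by positivity) ?_ (by gcongr)
  calc π / (2 * L) * M ≤ π / (2 * L) * L := by gcongr
    _ ≤ π := by field_simp; linarith [pi_pos]

theorem cos_mul_nonneg_of_abs_le {L t : ℝ} (hL : 0 < L) (ht : |t| ≤ L) :
    0 ≤ cos (π / (2 * L) * t) := by
  have hcos := cos_le_cos_mul_of_abs_le hL le_rfl ht
  rwa [show π / (2 * L) * L = π / 2 by field_simp, cos_pi_div_two] at hcos

theorem contDiff_cosBump (y : ι → ℝ) (L : ℝ) {n : WithTop ℕ∞} : ContDiff ℝ n (cosBump y L) :=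
  contDiff_prod fun k _ => contDiff_cos.comp (contDiff_const.mul ((contDiff_apply ℝ ℝ k).sub
    contDiff_const))

theorem cos_pow_le_cosBump {y x : ι → ℝ} {L M : ℝ} (hL : 0 < L) (hM : M ≤ L)
    (hx : ∀ k, |x k - y k| ≤ M) : cos (π / (2 * L) * M) ^ Fintype.card ι ≤ cosBump y L x := by
  rw [← Finset.card_univ, ← Finset.prod_const]
  exact Finset.prod_le_prod
    (fun k _ => cos_mul_nonneg_of_abs_le hL
      ((abs_of_nonneg ((abs_nonneg _).trans (hx k))).trans_le hM))
    (fun k _ => cos_le_cos_mul_of_abs_le hL hM (hx k))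

theorem cosBump_nonneg {y x : ι → ℝ} {L : ℝ} (hL : 0 < L) (hx : ∀ k, |x k - y k| ≤ L) :
    0 ≤ cosBump y L x :=
  Finset.prod_nonneg fun k _ => cos_mul_nonneg_of_abs_le hL (hx k)

theorem abs_cosBump_le_one (y : ι → ℝ) (L : ℝ) (x : ι → ℝ) : |cosBump y L x| ≤ 1 := by
  rw [cosBump, Finset.abs_prod]
  exact Finset.prod_le_one (fun _ _ => abs_nonneg _) fun _ _ => abs_cos_le_one _

theorem cosBump_eq_zero {y x : ι → ℝ} {L : ℝ} (hL : L ≠ 0) {i : ι} (hi : |x i - y i| = L) :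
    cosBump y L x = 0 := by
  refine Finset.prod_eq_zero (Finset.mem_univ i) ?_
  rw [← cos_abs, abs_mul, hi, abs_of_nonneg (by rw [← hi]; positivity),
    show π / (2 * L) * L = π / 2 by field_simp, cos_pi_div_two]

theorem setIntegral_cosBump_le {y : ι → ℝ} {L : ℝ} (hL : 0 < L) :
    ∫ x in Metric.closedBall y L, cosBump y L x ≤ (2 * L) ^ Fintype.card ι := by
  have h := norm_setIntegral_le_of_norm_le_const
    (measure_closedBall_lt_top (μ := volume) (x := y) (r := L))
    fun x _ => (Real.norm_eq_abs (cosBump y L x)).trans_le (abs_cosBump_le_one y L x)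
  rw [measureReal_def, Real.volume_pi_closedBall y hL.le, ENNReal.toReal_ofReal (by positivity),
    one_mul] at h
  exact (le_abs_self _).trans h

variable [DecidableEq ι]

theorem partialDeriv_cosBump (y : ι → ℝ) (L : ℝ) (i : ι) (x : ι → ℝ) :
    partialDeriv i (cosBump y L) x = -(π / (2 * L) * sin (π / (2 * L) * (x i - y i)))
      * ∏ k ∈ Finset.univ.erase i, cos (π / (2 * L) * (x k - y k)) :=
  partialDeriv_prod_apply (fun k => hasDerivAt_cos_mul_sub _ (y k)) i x

theorem piLaplacian_cosBump (y : ι → ℝ) (L : ℝ) (x : ι → ℝ) :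
    piLaplacian (cosBump y L) x = -(Fintype.card ι * (π / (2 * L)) ^ 2) * cosBump y L x := by
  have hsecond : ∀ i, partialDeriv i (partialDeriv i (cosBump y L)) x
      = -((π / (2 * L)) ^ 2) * cosBump y L x := fun i => by
    rw [cosBump, ← Finset.mul_prod_erase _ _ (Finset.mem_univ i), ← mul_assoc, neg_mul]
    exact partialDeriv_partialDeriv_prod_apply (fun k => hasDerivAt_cos_mul_sub _ (y k))
      (fun t => hasDerivAt_neg_mul_sin_mul_sub _ (y i) t) x
  simp only [piLaplacian, hsecond, Finset.sum_const, Finset.card_univ, nsmul_eq_mul]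
  ring

theorem partialDeriv_cosBump_nonneg {y x : ι → ℝ} {L : ℝ} (hL : 0 < L) (hx : ∀ k, |x k - y k| ≤ L)
    {i : ι} (hi : x i = y i - L) : 0 ≤ partialDeriv i (cosBump y L) x := by
  have hκ : 0 < π / (2 * L) := by positivity
  rw [partialDeriv_cosBump, hi, show y i - L - y i = -L by ring,
    show π / (2 * L) * -L = -(π / 2) by field_simp, sin_neg, sin_pi_div_two]
  exact mul_nonneg (by linarith) (Finset.prod_nonneg fun k _ => cos_mul_nonneg_of_abs_le hL (hx k))

theorem partialDeriv_cosBump_nonpos {y x : ι → ℝ} {L : ℝ} (hL : 0 < L) (hx : ∀ k, |x k - y k| ≤ L)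
    {i : ι} (hi : x i = y i + L) : partialDeriv i (cosBump y L) x ≤ 0 := by
  have hκ : 0 < π / (2 * L) := by positivity
  rw [partialDeriv_cosBump, hi, show y i + L - y i = L by ring,
    show π / (2 * L) * L = π / 2 by field_simp, sin_pi_div_two]
  exact mul_nonpos_of_nonpos_of_nonneg (by linarith)
    (Finset.prod_nonneg fun k _ => cos_mul_nonneg_of_abs_le hL (hx k))

end CosBump

section CubeEstimate

variable {n : ℕ} {s : Set (Fin (n + 1) → ℝ)} {U : (Fin (n + 1) → ℝ) → ℝ} {y : Fin (n + 1) → ℝ}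
  {L B : ℝ}

theorem integral_mul_piLaplacian_cosBump_le (hs : IsOpen s) (hU : ContDiffOn ℝ 2 U s)
    (hL : 0 < L) (hQ : Metric.closedBall y L ⊆ s) (hnn : ∀ x ∈ Metric.closedBall y L, 0 ≤ U x) :
    ∫ x in Metric.closedBall y L, U x * piLaplacian (cosBump y L) x
      ≤ ∫ x in Metric.closedBall y L, piLaplacian U x * cosBump y L x := by
  have hQI := closedBall_pi_eq_Icc y hL.le
  have hmem : ∀ x ∈ Icc (fun k => y k - L) (fun k => y k + L), ∀ k, |x k - y k| ≤ L :=
    fun x hx => (mem_closedBall_pi_iff hL.le).mp (hQI ▸ hx)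
  rw [hQI]
  refine integral_mul_piLaplacian_le (fun k => by linarith) hs (hQI ▸ hQ) hU
    (contDiff_cosBump y L) (fun x hx i hi => ⟨?_, ?_⟩) fun x hx i hi => ⟨?_, ?_⟩
  · exact cosBump_eq_zero hL.ne' (by rw [hi, sub_sub_cancel_left, abs_neg, abs_of_pos hL])
  · exact mul_nonneg (hnn x (hQI ▸ hx)) (partialDeriv_cosBump_nonneg hL (hmem x hx) hi)
  · exact cosBump_eq_zero hL.ne' (by rw [hi, add_sub_cancel_left, abs_of_pos hL])
  · exact mul_nonpos_of_nonneg_of_nonpos (hnn x (hQI ▸ hx))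
      (partialDeriv_cosBump_nonpos hL (hmem x hx) hi)

theorem integral_mul_cosBump_le (hs : IsOpen s) (hU : ContDiffOn ℝ 2 U s) (hL : 0 < L)
    (hB : 0 ≤ B) (hQ : Metric.closedBall y L ⊆ s) (hnn : ∀ x ∈ Metric.closedBall y L, 0 ≤ U x)
    (hlow : ∀ x ∈ Metric.closedBall y L,
      ((n + 1) * (π / (2 * L)) ^ 2 + 1) * U x - B ≤ -piLaplacian U x) :
    ∫ x in Metric.closedBall y L, U x * cosBump y L x ≤ B * (2 * L) ^ (n + 1) := by
  have hgreen := integral_mul_piLaplacian_cosBump_le hs hU hL hQ hnn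
  have hvol := setIntegral_cosBump_le (y := y) hL
  rw [Fintype.card_fin] at hvol
  set Q := Metric.closedBall y L
  set φ := cosBump y L
  have hint : ∀ g : (Fin (n + 1) → ℝ) → ℝ, ContinuousOn g Q → IntegrableOn g Q :=
    fun g hg => hg.integrableOn_compact (isCompact_closedBall y L)
  have hφc : ContinuousOn φ Q := (contDiff_cosBump y L (n := 0)).continuous.continuousOn
  have hUc : ContinuousOn U Q := hU.continuousOn.mono hQ
  have hΔUc : ContinuousOn (piLaplacian U) Q := (hU.continuousOn_piLaplacian hs).mono hQ
  have hΔφc : ContinuousOn (piLaplacian φ) Q :=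
    ((contDiff_cosBump y L).contDiffOn.continuousOn_piLaplacian isOpen_univ).mono (subset_univ Q)
  calc ∫ x in Q, U x * φ x
      ≤ ∫ x in Q, (B * φ x - (piLaplacian U x * φ x - U x * piLaplacian φ x)) := by
        refine setIntegral_mono_on (hint _ (hUc.mul hφc)) (hint _ ((continuousOn_const.mul hφc).sub
          ((hΔUc.mul hφc).sub (hUc.mul hΔφc)))) measurableSet_closedBall fun x hx => ?_
        have hφx := cosBump_nonneg hL ((mem_closedBall_pi_iff hL.le).mp hx)
        have := mul_le_mul_of_nonneg_right (hlow x hx) hφx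
        rw [piLaplacian_cosBump, Fintype.card_fin, Nat.cast_add, Nat.cast_one]
        nlinarith
    _ = B * (∫ x in Q, φ x)
          - ((∫ x in Q, piLaplacian U x * φ x) - ∫ x in Q, U x * piLaplacian φ x) := by
        rw [integral_sub, integral_sub, integral_const_mul]
        · exact hint _ (hΔUc.mul hφc)
        · exact hint _ (hUc.mul hΔφc)
        · exact hint _ (continuousOn_const.mul hφc)
        · exact hint _ ((hΔUc.mul hφc).sub (hUc.mul hΔφc))
    _ ≤ B * (2 * L) ^ (n + 1) := by nlinarith

theorem setIntegral_le_of_subset_closedBall_half (hs : IsOpen s) (hU : ContDiffOn ℝ 2 U s)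
    (hL : 0 < L) (hB : 0 ≤ B) (hQ : Metric.closedBall y L ⊆ s)
    (hnn : ∀ x ∈ Metric.closedBall y L, 0 ≤ U x)
    (hlow : ∀ x ∈ Metric.closedBall y L,
      ((n + 1) * (π / (2 * L)) ^ 2 + 1) * U x - B ≤ -piLaplacian U x)
    {T : Set (Fin (n + 1) → ℝ)} (hT : MeasurableSet T) (hTy : T ⊆ Metric.closedBall y (L / 2)) :
    ∫ x in T, U x ≤ B * (2 * L) ^ (n + 1) / cos (π / 4) ^ (n + 1) := by
  have hc : 0 < cos (π / 4) ^ (n + 1) := by rw [cos_pi_div_four]; positivity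
  have hTQ : T ⊆ Metric.closedBall y L :=
    hTy.trans (Metric.closedBall_subset_closedBall (by linarith))
  have hUφ : IntegrableOn (fun x => U x * cosBump y L x) (Metric.closedBall y L) :=
    ((hU.continuousOn.mono hQ).mul (contDiff_cosBump y L (n := 0)).continuous.continuousOn
      ).integrableOn_compact (isCompact_closedBall y L)
  rw [le_div_iff₀ hc, mul_comm, ← integral_const_mul]
  calc ∫ x in T, cos (π / 4) ^ (n + 1) * U x
      ≤ ∫ x in T, U x * cosBump y L x := by
        refine setIntegral_mono_on (((hU.continuousOn.mono hQ).integrableOn_compact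
          (isCompact_closedBall y L)).mono_set hTQ |>.const_mul _) (hUφ.mono_set hTQ) hT
          fun x hx => ?_
        have hφ := cos_pow_le_cosBump hL (by linarith)
          ((mem_closedBall_pi_iff (by linarith)).mp (hTy hx))
        rw [show π / (2 * L) * (L / 2) = π / 4 by field_simp; ring, Fintype.card_fin] at hφ
        rw [mul_comm]
        exact mul_le_mul_of_nonneg_left hφ (hnn x (hTQ hx))
    _ ≤ ∫ x in Metric.closedBall y L, U x * cosBump y L x :=
        setIntegral_mono_set hUφ ((ae_restrict_iff' measurableSet_closedBall).mpr (ae_of_all _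
          fun x hx => mul_nonneg (hnn x hx)
          (cosBump_nonneg hL ((mem_closedBall_pi_iff hL.le).mp hx))))
          hTQ.eventuallyLE
    _ ≤ B * (2 * L) ^ (n + 1) := integral_mul_cosBump_le hs hU hL hB hQ hnn hlow

end CubeEstimate

section Euclidean

open WithLp

theorem piLaplacian_comp_toLp {N : ℕ} (u : EuclideanSpace ℝ (Fin N) → ℝ) (x : Fin N → ℝ) :
    piLaplacian (fun y => u (toLp 2 y)) x = lap u (toLp 2 x) := by
  set e : (Fin N → ℝ) ≃L[ℝ] EuclideanSpace ℝ (Fin N) := (EuclideanSpace.equiv (Fin N) ℝ).symm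
  have hcomp : ∀ (g : EuclideanSpace ℝ (Fin N) → ℝ) (i : Fin N),
      partialDeriv i (g ∘ e) = fun z => fderiv ℝ g (e z) (EuclideanSpace.single i 1) := by
    intro g i
    funext z
    rw [partialDeriv, e.comp_right_fderiv]
    rfl
  refine Finset.sum_congr rfl fun i _ => ?_
  change partialDeriv i (partialDeriv i (u ∘ e)) x = _
  rw [hcomp, show (fun z => fderiv ℝ u (e z) (EuclideanSpace.single i 1))
    = (fun y => fderiv ℝ u y (EuclideanSpace.single i 1)) ∘ e from rfl, hcomp]
  rfl

theorem setIntegral_ball_le_of_supersolution {n : ℕ} {s : Set (EuclideanSpace ℝ (Fin (n + 1)))}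
    (hs : IsOpen s) {u : EuclideanSpace ℝ (Fin (n + 1)) → ℝ} (hu : ContDiffOn ℝ 2 u s)
    (hnn : ∀ x ∈ s, 0 ≤ u x) {L B : ℝ} (hL : 0 < L) (hB : 0 ≤ B)
    (hlow : ∀ x ∈ s, ((n + 1) * (π / (2 * L)) ^ 2 + 1) * u x - B ≤ -lap u x)
    {p : EuclideanSpace ℝ (Fin (n + 1))} (hQ : Metric.closedBall p (√(n + 1 : ℝ) * L) ⊆ s) :
    ∫ x in Metric.ball p (L / 2), u x ≤ B * (2 * L) ^ (n + 1) / cos (π / 4) ^ (n + 1) := by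
  set e : (Fin (n + 1) → ℝ) ≃L[ℝ] EuclideanSpace ℝ (Fin (n + 1)) :=
    (EuclideanSpace.equiv (Fin (n + 1)) ℝ).symm
  have hQ' : Metric.closedBall (ofLp p) L ⊆ e ⁻¹' s := fun x hx => hQ <| by
    have h := EuclideanSpace.dist_le_sqrt_card_mul (x := e x) (y := p) hL.le
      ((mem_closedBall_pi_iff hL.le).mp hx)
    rwa [Fintype.card_fin, Nat.cast_add, Nat.cast_one] at h
  have hball : e ⁻¹' Metric.ball p (L / 2) ⊆ Metric.closedBall (ofLp p) (L / 2) := fun x hx =>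
    (mem_closedBall_pi_iff (by linarith)).mpr fun k =>
      (Real.dist_eq _ _ ▸ PiLp.dist_apply_le (e x) p k).trans (Metric.mem_ball.mp hx).le
  rw [← (PiLp.volume_preserving_toLp (Fin (n + 1))).setIntegral_preimage_emb
    (MeasurableEquiv.toLp 2 (Fin (n + 1) → ℝ)).measurableEmbedding]
  exact setIntegral_le_of_subset_closedBall_half (hs.preimage e.continuous)
    (hu.comp e.contDiff.contDiffOn fun _ hx => hx) hL hB hQ'
    (fun x hx => hnn _ (hQ' hx))
    (fun x hx => (piLaplacian_comp_toLp u x).symm ▸ hlow _ (hQ' hx))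
    (measurableSet_ball.preimage e.continuous.measurable) hball

end Euclidean

theorem exists_finset_ball_subset_biUnion_ball {E : Type*} [SeminormedAddCommGroup E]
    [ProperSpace E] (r : ℝ) {ρ : ℝ} (hρ : 0 < ρ) :
    ∃ P : Finset E, (∀ p ∈ P, ‖p‖ ≤ r) ∧ ∀ z, Metric.ball z r ⊆ ⋃ p ∈ P, Metric.ball (z + p) ρ := by
  obtain ⟨P, hP0, hP, hcover⟩ := finite_cover_balls_of_compact (isCompact_closedBall (0 : E) r) hρ
  refine ⟨hP.toFinset, fun p hp => mem_closedBall_zero_iff.mp (hP0 (hP.mem_toFinset.mp hp)),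
    fun z x hx => ?_⟩
  obtain ⟨p, hp, hxp⟩ :=
    mem_iUnion₂.mp (hcover (mem_closedBall_zero_iff.mpr (mem_ball_iff_norm.mp hx).le))
  refine mem_iUnion₂.mpr ⟨p, hP.mem_toFinset.mpr hp, ?_⟩
  rwa [mem_ball_iff_norm, show x - (z + p) = x - z - p by abel, ← mem_ball_iff_norm]

theorem stmt11_general (N : ℕ) (lst : Fin N)
    (f : ℝ → ℝ) (hf : ContinuousOn f (Ici 0))
    (hsup : Tendsto (fun t : ℝ => f t / t) atTop atTop)
    (u : EuclideanSpace ℝ (Fin N) → ℝ)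
    (hu : ContDiffOn ℝ 2 u {x : EuclideanSpace ℝ (Fin N) | 0 < x lst})
    (hnn : ∀ x : EuclideanSpace ℝ (Fin N), 0 < x lst → 0 ≤ u x)
    (hineq : ∀ x : EuclideanSpace ℝ (Fin N), 0 < x lst → f (u x) ≤ - lap u x) :
    ∀ R > (0:ℝ), ∃ C₁ > (0:ℝ), ∀ z : EuclideanSpace ℝ (Fin N),
      Metric.closedBall z (2 * R) ⊆ {x : EuclideanSpace ℝ (Fin N) | 0 < x lst} →
      ∫ x in Metric.ball z R, u x ≤ C₁ := by
  obtain ⟨n, rfl⟩ := Nat.exists_eq_add_one.mpr lst.pos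
  intro R hR
  have hH : IsOpen {x : EuclideanSpace ℝ (Fin (n + 1)) | 0 < x lst} :=
    isOpen_lt continuous_const (PiLp.continuous_apply 2 _ lst)
  have hsqrt : 1 ≤ √(n + 1 : ℝ) := Real.one_le_sqrt.mpr (by linarith [n.cast_nonneg (α := ℝ)])
  set L := R / √(n + 1 : ℝ)
  have hL : 0 < L := by positivity
  obtain ⟨B, hB, hfB⟩ :=
    exists_mul_sub_le_of_tendsto_div_atTop hf hsup ((n + 1) * (π / (2 * L)) ^ 2 + 1)
  obtain ⟨P, hP, hcover⟩ :=
    exists_finset_ball_subset_biUnion_ball (E := EuclideanSpace ℝ (Fin (n + 1))) R (half_pos hL)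
  set C := B * (2 * L) ^ (n + 1) / cos (π / 4) ^ (n + 1)
  have hC : 0 ≤ C := by simp only [C, cos_pi_div_four]; positivity
  refine ⟨P.card * C + 1, by positivity, fun z hz => ?_⟩
  have hQ : ∀ p ∈ P, Metric.closedBall (z + p) (√(n + 1 : ℝ) * L) ⊆ Metric.closedBall z (2 * R) :=
    fun p hp => Metric.closedBall_subset_closedBall' <| by
      rw [mul_div_cancel₀ _ (by positivity)]; simpa [two_mul] using hP p hp
  have hball : ∀ p ∈ P, Metric.ball (z + p) (L / 2) ⊆ Metric.closedBall z (2 * R) := fun p hp =>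
    (Metric.ball_subset_closedBall.trans (Metric.closedBall_subset_closedBall (by nlinarith))).trans
      (hQ p hp)
  calc ∫ x in Metric.ball z R, u x
      ≤ ∑ p ∈ P, ∫ x in Metric.ball (z + p) (L / 2), u x :=
        setIntegral_le_sum_of_subset_biUnion measurableSet_ball (fun _ _ => measurableSet_ball)
          (hcover z) (fun p hp => ((hu.continuousOn.mono hz).integrableOn_compact
            (isCompact_closedBall z (2 * R))).mono_set (hball p hp))
          fun p hp x hx => hnn x (hz (hball p hp hx))
    _ ≤ ∑ _p ∈ P, C := Finset.sum_le_sum fun p hp =>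
        setIntegral_ball_le_of_supersolution hH hu hnn hL hB
          (fun x hx => (hfB _ (hnn x hx)).trans (hineq x hx)) ((hQ p hp).trans hz)
    _ ≤ P.card * C + 1 := by rw [Finset.sum_const, nsmul_eq_mul]; linarith

/-- If f is superlinear (f(t)/t → +∞), any nonnegative C² supersolution
of -Δu ≥ f(u) in the half-space satisfies, for every R > 0, a bound
∫_{B(z,R)} u ≤ C₁(N,f,R) uniform over all balls B(z,2R) ⊂⊂ ℝᴺ₊. -/
theorem stmt11 (N : ℕ) (hN : 2 ≤ N) (lst : Fin N) (hlst : (lst : ℕ) = N - 1)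
    (f : ℝ → ℝ) (hf : ContinuousOn f (Ici 0))
    (hsup : Tendsto (fun t : ℝ => f t / t) atTop atTop)
    (u : EuclideanSpace ℝ (Fin N) → ℝ)
    (hu : ContDiffOn ℝ 2 u {x : EuclideanSpace ℝ (Fin N) | 0 < x lst})
    (hnn : ∀ x : EuclideanSpace ℝ (Fin N), 0 < x lst → 0 ≤ u x)
    (hineq : ∀ x : EuclideanSpace ℝ (Fin N), 0 < x lst → f (u x) ≤ - lap u x) :
    ∀ R > (0:ℝ), ∃ C₁ > (0:ℝ), ∀ z : EuclideanSpace ℝ (Fin N),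
      Metric.closedBall z (2 * R) ⊆ {x : EuclideanSpace ℝ (Fin N) | 0 < x lst} →
      ∫ x in Metric.ball z R, u x ≤ C₁ :=
  stmt11_general N lst f hf hsup u hu hnn hineq
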